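/- Let X be an NPC space, let G be a locally compact group acting continuously by isometries on X, and let g ∈ G have unbounded action on X with an attracting point ξ ∈ ∂X. Then par_G(g⁻¹) ≤ G_ξ. If moreover g is hyperbolic and the action of G on X is proper, then par_G(g⁻¹) = G_ξ. -/

import Mathlib

open Filter Set Topology Pointwise MeasureTheory

section MetricDefs

variable {X : Type*} [MetricSpace X]

/-- `γ` restricted to `s` is a unit-speed geodesic (isometric embedding of `s ⊆ ℝ`). -/
def IsGeodesicOn (γ : ℝ → X) (s : Set ℝ) : Prop :=
  ∀ u ∈ s, ∀ v ∈ s, dist (γ u) (γ v) = |u - v|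

/-- A geodesic segment parametrized by arclength on `[a,b]`, from `x` to `y`. -/
def IsGeodesicSegment (γ : ℝ → X) (a b : ℝ) (x y : X) : Prop :=
  a ≤ b ∧ γ a = x ∧ γ b = y ∧ IsGeodesicOn γ (Set.Icc a b)

/-- A geodesic metric space: any two points are joined by a geodesic. -/
def GeodesicSpace (X : Type*) [MetricSpace X] : Prop :=
  ∀ x y : X, ∃ γ : ℝ → X, IsGeodesicSegment γ 0 (dist x y) x y

/-- A geodesic ray (unit-speed on `[0,∞)`). -/
def IsGeodesicRay (γ : ℝ → X) : Prop := IsGeodesicOn γ (Set.Ici 0)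

/-- A geodesic line (unit-speed on all of `ℝ`). -/
def IsGeodesicLine (γ : ℝ → X) : Prop := IsGeodesicOn γ Set.univ

/-- CAT(0) space, via the CN (Bruhat–Tits) inequality, equivalent to the CAT(0)
comparison-triangle inequality for geodesic spaces. -/
def CAT0 (X : Type*) [MetricSpace X] : Prop :=
  GeodesicSpace X ∧ ∀ x y z m : X, dist y m = dist y z / 2 → dist z m = dist y z / 2 →
    dist x m ^ 2 ≤ (dist x y ^ 2 + dist x z ^ 2) / 2 - dist y z ^ 2 / 4

/-- All geodesic triangles are `δ`-thin: each point on one side lies within `δ` of the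
union of the other two sides. -/
def SlimTriangles (X : Type*) [MetricSpace X] (δ : ℝ) : Prop :=
  ∀ (x y z : X) (γ₁ γ₂ γ₃ : ℝ → X),
    IsGeodesicSegment γ₁ 0 (dist x y) x y →
    IsGeodesicSegment γ₂ 0 (dist y z) y z →
    IsGeodesicSegment γ₃ 0 (dist z x) z x →
    ∀ s ∈ Set.Icc (0:ℝ) (dist x y),
      ∃ p ∈ γ₂ '' Set.Icc (0:ℝ) (dist y z) ∪ γ₃ '' Set.Icc (0:ℝ) (dist z x),
        dist (γ₁ s) p ≤ δ

/-- Gromov `δ`-hyperbolic (δ-thin geodesic triangles). -/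
def GromovHyperbolic (X : Type*) [MetricSpace X] (δ : ℝ) : Prop :=
  0 ≤ δ ∧ SlimTriangles X δ

/-- An NPC space: a geodesic space that is either complete CAT(0), or proper and
Gromov-hyperbolic. -/
def NPCSpace (X : Type*) [MetricSpace X] : Prop :=
  GeodesicSpace X ∧
    ((CompleteSpace X ∧ CAT0 X) ∨ (ProperSpace X ∧ ∃ δ : ℝ, GromovHyperbolic X δ))

/-- Uniquely geodesic space. -/
def UniquelyGeodesic (X : Type*) [MetricSpace X] : Prop :=
  ∀ (x y : X) (γ₁ γ₂ : ℝ → X), IsGeodesicSegment γ₁ 0 (dist x y) x y →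
    IsGeodesicSegment γ₂ 0 (dist x y) x y → ∀ t ∈ Set.Icc (0:ℝ) (dist x y), γ₁ t = γ₂ t

/-- Two rays are asymptotic: they stay at bounded distance. -/
def AsympRays (γ₁ γ₂ : ℝ → X) : Prop :=
  ∃ C : ℝ, ∀ t : ℝ, 0 ≤ t → dist (γ₁ t) (γ₂ t) ≤ C

/-- The boundary points of the rays `γ₁, γ₂` are opposite: some geodesic line has
`γ₁`'s class as backward endpoint and `γ₂`'s class as forward endpoint. -/
def OppositeEnds (γ₁ γ₂ : ℝ → X) : Prop :=
  ∃ L : ℝ → X, IsGeodesicLine L ∧ AsympRays (fun t => L (-t)) γ₁ ∧ AsympRays L γ₂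

/-- The sequence `x` converges to the boundary point represented by the ray `γ`:
it goes to infinity and geodesic segments from `γ 0` to `x n` eventually fellow-travel
`γ` within a uniform bound (this is convergence in the cone topology for CAT(0) spaces,
and Gromov convergence for hyperbolic spaces). -/
def ConvergesToEnd (x : ℕ → X) (γ : ℝ → X) : Prop :=
  Tendsto (fun n => dist (γ 0) (x n)) atTop atTop ∧
  ∃ C : ℝ, ∀ t : ℝ, 0 ≤ t → ∀ σ : ℕ → ℝ → X,
    (∀ n, IsGeodesicSegment (σ n) 0 (dist (γ 0) (x n)) (γ 0) (x n)) →
    ∀ᶠ n in atTop, dist (σ n t) (γ t) ≤ C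

/-- Geodesically convex subset. -/
def GeodesicallyConvex (Y : Set X) : Prop :=
  ∀ x ∈ Y, ∀ y ∈ Y, ∀ γ : ℝ → X, IsGeodesicSegment γ 0 (dist x y) x y →
    ∀ t ∈ Set.Icc (0:ℝ) (dist x y), γ t ∈ Y

/-- `Z` is an absorbing set for the boundary point of the ray `ρ` within `Y`. -/
def IsAbsorbing (Y Z : Set X) (ρ : ℝ → X) : Prop :=
  ∃ r : ℝ → ℝ, Tendsto r atTop atTop ∧
    ∀ᶠ t in atTop, ∀ y ∈ Y, dist (ρ t) y ≤ r t → y ∈ Z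

/-- The path (induced length) pseudo-distance inside a subset `T` of `X`. -/
noncomputable def pathDist (T : Set X) (x y : X) : ENNReal :=
  ⨅ (f : ℝ → X) (_ : ContinuousOn f (Set.Icc 0 1)) (_ : Set.MapsTo f (Set.Icc 0 1) T)
    (_ : f 0 = x) (_ : f 1 = y), eVariationOn f (Set.Icc 0 1)

end MetricDefs

section ActionDefs

variable {X : Type*} [MetricSpace X] {G : Type*} [Group G] [MulAction G X]

/-- `G` acts on `X` by isometries. -/
def IsometricAction (G X : Type*) [Group G] [MetricSpace X] [MulAction G X] : Prop :=
  ∀ g : G, Isometry fun x : X => g • x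

/-- The action of `G` on `X` is (metrically) proper. -/
def ProperAction (G X : Type*) [Group G] [TopologicalSpace G] [MetricSpace X]
    [MulAction G X] : Prop :=
  ∀ (x : X) (r : ℝ), IsCompact {g : G | dist (g • x) x ≤ r}

/-- The action of `G` on `X` is locally discrete: around each point, some ball of
positive radius has open pointwise fixator. -/
def BoundedElt (X : Type*) [MetricSpace X] {G : Type*} [Group G] [MulAction G X]
    (g : G) : Prop :=
  ∀ x : X, Bornology.IsBounded (Set.range fun n : ℤ => g ^ n • x)

/-- The ray `γ` represents the attracting point of `g`: all forward orbits of `g`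
converge to the corresponding boundary point. -/
def AttractsTo (g : G) (γ : ℝ → X) : Prop :=
  IsGeodesicRay γ ∧ ∀ x : X, ConvergesToEnd (fun n => g ^ n • x) γ

/-- `γ` is a (labelled) axis of `g`: `g` translates along the geodesic line `γ`. -/
def IsAxialWith (g : G) (γ : ℝ → X) : Prop :=
  IsGeodesicLine γ ∧ ∃ k : ℝ, 0 < k ∧ ∀ t : ℝ, g • γ t = γ (t + k)

/-- `g` is an axial isometry of `X`. -/
def IsAxial (X : Type*) [MetricSpace X] {G : Type*} [Group G] [MulAction G X]
    (g : G) : Prop :=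
  ∃ γ : ℝ → X, IsAxialWith g γ

/-- `n ↦ gⁿ • x` is a quasi-isometric embedding of `ℤ` into `X`. -/
def QIHyperbolic (X : Type*) [MetricSpace X] {G : Type*} [Group G] [MulAction G X]
    (g : G) : Prop :=
  ∃ (x : X) (a b : ℝ), 0 < a ∧ 0 ≤ b ∧ ∀ m n : ℤ,
    a⁻¹ * |(m : ℝ) - (n : ℝ)| - b ≤ dist (g ^ m • x) (g ^ n • x) ∧
    dist (g ^ m • x) (g ^ n • x) ≤ a * |(m : ℝ) - (n : ℝ)| + b

/-- `g` acts as a hyperbolic isometry of the NPC space `X`: axial in the complete CAT(0)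
case, QI-hyperbolic in the proper Gromov-hyperbolic case. -/
def IsHyperbolicIsom (X : Type*) [MetricSpace X] {G : Type*} [Group G] [MulAction G X]
    (g : G) : Prop :=
  (CompleteSpace X ∧ CAT0 X ∧ IsAxial X g) ∨
  (ProperSpace X ∧ (∃ δ : ℝ, GromovHyperbolic X δ) ∧ QIHyperbolic X g)

/-- Translation length of `g` on `X` (the limit of `d(x, gⁿx)/n`, realized as an
infimum by subadditivity). -/
noncomputable def translationLength (X : Type*) [MetricSpace X] {G : Type*} [Group G]
    [MulAction G X] (g : G) : ℝ :=
  sInf {r : ℝ | ∃ (x : X) (n : ℕ), 0 < n ∧ r = dist x (g ^ n • x) / n}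

/-- The stabilizer in `G` of the boundary point represented by the ray `γ`. -/
def endStabilizer (hiso : IsometricAction G X) (γ : ℝ → X) : Subgroup G where
  carrier := {g : G | AsympRays (fun t => g • γ t) γ}
  one_mem' := ⟨0, fun t _ => by simp⟩
  mul_mem' := by
    rintro a b ⟨Ca, hCa⟩ ⟨Cb, hCb⟩
    refine ⟨Cb + Ca, fun t ht => ?_⟩
    have h1 : dist ((a * b) • γ t) (a • γ t) = dist (b • γ t) (γ t) := by
      rw [mul_smul]
      exact (hiso a).dist_eq _ _
    calc dist ((a * b) • γ t) (γ t)
        ≤ dist ((a * b) • γ t) (a • γ t) + dist (a • γ t) (γ t) := dist_triangle _ _ _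
      _ ≤ Cb + Ca := add_le_add (h1 ▸ hCb t ht) (hCa t ht)
  inv_mem' := by
    rintro a ⟨Ca, hCa⟩
    refine ⟨Ca, fun t ht => ?_⟩
    have h1 : dist (a⁻¹ • γ t) (γ t) = dist (γ t) (a • γ t) := by
      have := (hiso a).dist_eq (a⁻¹ • γ t) (γ t)
      simp only [smul_inv_smul] at this
      exact this.symm
    rw [h1, dist_comm]
    exact hCa t ht

/-- The setwise stabilizer of `Y ⊆ X` in `G`. -/
def setStabilizer (G : Type*) {X : Type*} [Group G] [MulAction G X] (Y : Set X) :
    Subgroup G where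
  carrier := {g : G | ∀ y : X, y ∈ Y ↔ g • y ∈ Y}
  one_mem' := fun y => by simp
  mul_mem' := by
    intro a b ha hb y
    rw [mul_smul]
    exact (hb y).trans (ha (b • y))
  inv_mem' := by
    intro a ha y
    have := ha (a⁻¹ • y)
    rw [smul_inv_smul] at this
    exact this.symm

/-- The pointwise fixator of `Y ⊆ X` in `G`. -/
def fixator (G : Type*) {X : Type*} [Group G] [MulAction G X] (Y : Set X) :
    Subgroup G where
  carrier := {g : G | ∀ y ∈ Y, g • y = y}
  one_mem' := fun y _ => one_smul _ y
  mul_mem' := by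
    intro a b ha hb y hy
    rw [mul_smul, hb y hy, ha y hy]
  inv_mem' := by
    intro a ha y hy
    conv_lhs => rw [← ha y hy]
    rw [inv_smul_smul]

/-- The set of common fixed points in `X` of a set of group elements. -/
def fixedSet (X : Type*) {G : Type*} [Group G] [MulAction G X] (S : Set G) : Set X :=
  {x : X | ∀ g ∈ S, g • x = x}

/-- The action is locally discrete: around each point there is a ball of positive
radius whose fixator is open. -/
def LocallyDiscreteAction (G X : Type*) [Group G] [TopologicalSpace G] [MetricSpace X]
    [MulAction G X] : Prop :=
  ∀ x : X, ∃ r : ℝ, 0 < r ∧ IsOpen ((fixator G (Metric.closedBall x r) : Set G))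

end ActionDefs

section GroupDefs

variable {G : Type*} [Group G]

/-- The parabolic set of `g`: elements with relatively compact forward `g`-conjugation
orbit. -/
def parSet [TopologicalSpace G] (g : G) : Set G :=
  {x : G | IsCompact (closure (Set.range fun n : ℕ => g ^ n * x * (g ^ n)⁻¹))}

/-- The contraction set of `g` modulo the subgroup `K`: elements whose forward
`g`-conjugation orbit converges to the trivial coset in `G ⧸ K`. -/
def conSet [TopologicalSpace G] (g : G) (K : Subgroup G) : Set G :=
  {x : G | Tendsto (fun n : ℕ => ((g ^ n * x * (g ^ n)⁻¹ : G) : G ⧸ K)) atTop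
    (𝓝 ((1 : G) : G ⧸ K))}

/-- A compact open subgroup. -/
def CompactOpen [TopologicalSpace G] (U : Subgroup G) : Prop :=
  IsCompact (U : Set G) ∧ IsOpen (U : Set G)

/-- The displacement index `|gUg⁻¹ : U ∩ gUg⁻¹|`. -/
noncomputable def scaleIndex (g : G) (U : Subgroup G) : ℕ :=
  U.relIndex (U.map (MulAut.conj g).toMonoidHom)

/-- The scale of `g`: minimum of `|gUg⁻¹ : U ∩ gUg⁻¹|` over compact open subgroups. -/
noncomputable def scale [TopologicalSpace G] (g : G) : ℕ :=
  sInf {n : ℕ | ∃ U : Subgroup G, CompactOpen U ∧ scaleIndex g U = n}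

/-- `U` is a minimizing (tidy) compact open subgroup for `g`. -/
def IsMinimizing [TopologicalSpace G] (g : G) (U : Subgroup G) : Prop :=
  CompactOpen U ∧ scaleIndex g U = scale g

/-- For a t.d.l.c. group, the modular function satisfies
`Δ(g) = |gUg⁻¹ : U ∩ gUg⁻¹| / |U : U ∩ gUg⁻¹|` for every compact open subgroup `U`.
`ModularEq g s` says that `Δ(g) = s`. -/
def ModularEq [TopologicalSpace G] (g : G) (s : ℕ) : Prop :=
  ∀ U : Subgroup G, CompactOpen U → scaleIndex g U = s * scaleIndex g⁻¹ U

/-- `U₊ = ⋂_{n ≥ 0} gⁿ U g⁻ⁿ`. -/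
def Uplus (g : G) (U : Subgroup G) : Subgroup G :=
  ⨅ n : ℕ, U.map (MulAut.conj (g ^ n)).toMonoidHom

/-- `U₋ = ⋂_{n ≤ 0} gⁿ U g⁻ⁿ`. -/
def Uminus (g : G) (U : Subgroup G) : Subgroup G :=
  ⨅ n : ℕ, U.map (MulAut.conj ((g ^ n)⁻¹)).toMonoidHom

/-- `U` is tidy for `g` (conditions TA and TB of Willis). -/
def TidyFor [TopologicalSpace G] (g : G) (U : Subgroup G) : Prop :=
  CompactOpen U ∧
  (U : Set G) = (Uplus g U : Set G) * (Uminus g U : Set G) ∧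
  IsClosed (⋃ n : ℕ, (fun h : G => g ^ n * h * (g ^ n)⁻¹) '' (Uplus g U : Set G))

/-- The nub of `g`: intersection of all minimizing (tidy) subgroups for `g`. -/
noncomputable def nub [TopologicalSpace G] (g : G) : Subgroup G :=
  ⨅ (U : Subgroup G) (_ : IsMinimizing g U), U

/-- The scale of an automorphism `α`: minimum of `|α(U) : α(U) ∩ U|` over compact open
subgroups. -/
noncomputable def scaleAut [TopologicalSpace G] (α : G ≃* G) : ℕ :=
  sInf {n : ℕ | ∃ U : Subgroup G, CompactOpen U ∧ U.relIndex (U.map α.toMonoidHom) = n}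

end GroupDefs

section TreeDefs

variable {X : Type*} [MetricSpace X]

/-- `x ≤_T y`: some geodesic ray from `x` to the end of `ρ` contained in `T` passes
through `y`. -/
def leTree (T : Set X) (ρ : ℝ → X) (x y : X) : Prop :=
  ∃ γ : ℝ → X, IsGeodesicRay γ ∧ γ 0 = x ∧ AsympRays γ ρ ∧ γ '' Set.Ici (0:ℝ) ⊆ T ∧
    ∃ t : ℝ, 0 ≤ t ∧ γ t = y

/-- The branching function of the tree `T` (with distinguished end given by `ρ`)
based at `x₀`. -/
noncomputable def branching (T : Set X) (ρ : ℝ → X) (x₀ : X) (m : ℝ) : ℕ :=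
  if 0 < m then
    Nat.card {y : X | leTree T ρ y x₀ ∧ pathDist T x₀ y = ENNReal.ofReal m}
  else 1

end TreeDefs

/-!
If `x ∈ par_G(g⁻¹)`, the conjugates `g⁻ⁿ x gⁿ` stay in a compact set, so `x` moves the points
`gⁿ (γ 0)` by a bounded amount. Geodesic segments with close endpoints fellow-travel in an NPC
space (by convexity of the metric in the CAT(0) case, by slimness of triangles in the hyperbolic
case), so `x` also moves the segments from `γ 0` to `gⁿ (γ 0)` boundedly; these converge to `γ`,
hence `x γ` is asymptotic to `γ`.

Conversely, if `g` is hyperbolic then some orbit `gⁿ p` stays close to `γ`: it lies on an axis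
asymptotic to `γ`, resp. it is a quasi-geodesic and the Morse lemma applies. An element fixing the
end of `γ` therefore moves this orbit boundedly, and by properness the conjugates `g⁻ⁿ x gⁿ` stay
in a compact set.
-/

open Metric

section Geodesics

variable {X : Type*} [MetricSpace X]

namespace IsGeodesicOn

variable {γ : ℝ → X} {s : Set ℝ}

lemma dist_eq_sub (h : IsGeodesicOn γ s) {u v : ℝ} (hu : u ∈ s) (hv : v ∈ s) (huv : u ≤ v) :
    dist (γ u) (γ v) = v - u := by
  rw [h u hu v hv, abs_of_nonpos (sub_nonpos.2 huv), neg_sub]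

lemma mono (h : IsGeodesicOn γ s) {s' : Set ℝ} (hs' : s' ⊆ s) : IsGeodesicOn γ s' :=
  fun u hu v hv => h u (hs' hu) v (hs' hv)

lemma comp_isometry (h : IsGeodesicOn γ s) {f : X → X} (hf : Isometry f) :
    IsGeodesicOn (fun t => f (γ t)) s :=
  fun u hu v hv => (hf.dist_eq _ _).trans (h u hu v hv)

lemma lipschitzOnWith (h : IsGeodesicOn γ s) : LipschitzOnWith 1 γ s :=
  LipschitzOnWith.of_dist_le_mul fun u hu v hv => by simp [h u hu v hv, Real.dist_eq]

lemma dist_midpoint (h : IsGeodesicOn γ s) {u v : ℝ} (hu : u ∈ s) (hv : v ∈ s)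
    (huv : (u + v) / 2 ∈ s) :
    dist (γ u) (γ ((u + v) / 2)) = dist (γ u) (γ v) / 2 ∧
      dist (γ v) (γ ((u + v) / 2)) = dist (γ u) (γ v) / 2 := by
  rw [h _ hu _ huv, h _ hv _ huv, h _ hu _ hv]
  constructor
  · rw [show u - (u + v) / 2 = (u - v) / 2 by ring, abs_div, abs_two]
  · rw [show v - (u + v) / 2 = -((u - v) / 2) by ring, abs_neg, abs_div, abs_two]

lemma dist_le_two_mul_add {L : ℝ} (h : IsGeodesicOn γ (Icc 0 L)) {u t : ℝ}
    (hu : u ∈ Icc 0 L) (ht : t ∈ Icc 0 L) (y : X) :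
    dist y (γ t) ≤ 2 * dist y (γ u) + |t - dist (γ 0) y| := by
  have h0 : (0 : ℝ) ∈ Icc 0 L := ⟨le_rfl, hu.1.trans hu.2⟩
  have hu0 : dist (γ 0) (γ u) = u := by rw [h.dist_eq_sub h0 hu hu.1, sub_zero]
  have hu' : |u - dist (γ 0) y| ≤ dist y (γ u) := by
    have := dist_dist_dist_le_right (γ 0) (γ u) y
    rw [Real.dist_eq, hu0] at this
    rwa [dist_comm y]
  calc dist y (γ t) ≤ dist y (γ u) + dist (γ u) (γ t) := dist_triangle _ _ _
    _ = dist y (γ u) + |(u - dist (γ 0) y) - (t - dist (γ 0) y)| := by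
        rw [h u hu t ht]; ring_nf
    _ ≤ dist y (γ u) + (|u - dist (γ 0) y| + |t - dist (γ 0) y|) := by
        gcongr; exact abs_sub _ _
    _ ≤ 2 * dist y (γ u) + |t - dist (γ 0) y| := by linarith

end IsGeodesicOn

namespace IsGeodesicSegment

variable {γ : ℝ → X} {x y : X}

lemma dist_left (h : IsGeodesicSegment γ 0 (dist x y) x y) {u : ℝ}
    (hu : u ∈ Icc 0 (dist x y)) : dist x (γ u) = u := by
  rw [← h.2.1, h.2.2.2.dist_eq_sub ⟨le_rfl, dist_nonneg⟩ hu hu.1, sub_zero]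

lemma dist_right (h : IsGeodesicSegment γ 0 (dist x y) x y) {u : ℝ}
    (hu : u ∈ Icc 0 (dist x y)) : dist (γ u) y = dist x y - u := by
  conv_lhs => rw [← h.2.2.1]
  exact h.2.2.2.dist_eq_sub hu ⟨dist_nonneg, le_rfl⟩ hu.2

lemma symm (h : IsGeodesicSegment γ 0 (dist x y) x y) :
    IsGeodesicSegment (fun s => γ (dist x y - s)) 0 (dist y x) y x := by
  obtain ⟨hd, h0, h1, hgeo⟩ := h
  refine ⟨dist_nonneg, by simpa using h1, by simpa [dist_comm] using h0, fun u hu v hv => ?_⟩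
  rw [dist_comm y x] at hu hv
  rw [hgeo _ ⟨by linarith [hu.2], by linarith [hu.1]⟩ _ ⟨by linarith [hv.2], by linarith [hv.1]⟩,
    abs_sub_comm]
  ring_nf

end IsGeodesicSegment

lemma IsGeodesicOn.exists_subsegment {γ : ℝ → X} {T : ℝ} (h : IsGeodesicOn γ (Icc 0 T)) {u₁ u₂ : ℝ}
    (hu₁ : u₁ ∈ Icc 0 T) (hu₂ : u₂ ∈ Icc 0 T) :
    ∃ ν : ℝ → X, IsGeodesicSegment ν 0 (dist (γ u₁) (γ u₂)) (γ u₁) (γ u₂) ∧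
      ν '' Icc 0 (dist (γ u₁) (γ u₂)) ⊆ γ '' Icc 0 T := by
  wlog h12 : u₁ ≤ u₂ generalizing u₁ u₂
  · obtain ⟨ν, hν, hνT⟩ := this hu₂ hu₁ (le_of_not_ge h12)
    refine ⟨_, hν.symm, ?_⟩
    rintro _ ⟨v, hv, rfl⟩
    rw [dist_comm] at hv
    exact hνT ⟨_, ⟨by linarith [hv.2], by linarith [hv.1]⟩, rfl⟩
  have hd : dist (γ u₁) (γ u₂) = u₂ - u₁ := h.dist_eq_sub hu₁ hu₂ h12
  have hmem : ∀ v ∈ Icc 0 (dist (γ u₁) (γ u₂)), u₁ + v ∈ Icc 0 T := fun v hv => by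
    rw [hd] at hv; exact ⟨by linarith [hv.1, hu₁.1], by linarith [hv.2, hu₂.2]⟩
  refine ⟨fun v => γ (u₁ + v), ⟨dist_nonneg, by simp, by rw [hd]; ring_nf, ?_⟩, ?_⟩
  · intro v hv w hw
    rw [h _ (hmem v hv) _ (hmem w hw)]
    ring_nf
  · rintro _ ⟨v, hv, rfl⟩
    exact ⟨_, hmem v hv, rfl⟩

lemma IsGeodesicOn.isGeodesicSegment {γ : ℝ → X} {L : ℝ} (h : IsGeodesicOn γ (Icc 0 L))
    (hL : 0 ≤ L) :
    IsGeodesicSegment γ 0 (dist (γ 0) (γ L)) (γ 0) (γ L) := by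
  have hd : dist (γ 0) (γ L) = L := by
    rw [h.dist_eq_sub ⟨le_rfl, hL⟩ ⟨hL, le_rfl⟩ hL, sub_zero]
  exact ⟨dist_nonneg, rfl, by rw [hd], by rwa [hd]⟩

lemma IsGeodesicOn.isCompact_image {γ : ℝ → X} {L : ℝ} (h : IsGeodesicOn γ (Icc 0 L)) :
    IsCompact (γ '' Icc 0 L) :=
  isCompact_Icc.image_of_continuousOn h.lipschitzOnWith.continuousOn

lemma IsGeodesicSegment.infDist_le {η : ℝ → X} {y w : X} (hη : IsGeodesicSegment η 0 (dist y w) y w)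
    {Γ : Set X} (hw : w ∈ Γ) {u : ℝ} (hu : u ∈ Icc 0 (dist y w)) (x : X) :
    infDist x Γ ≤ 2 * dist x (η u) + dist y w - dist x y := by
  have h₁ := hη.dist_left hu
  have h₂ := hη.dist_right hu
  linarith [infDist_le_dist_of_mem (x := x) hw, dist_triangle x (η u) w, dist_triangle x (η u) y,
    dist_comm y (η u)]

end Geodesics

section MidpointConvex

variable {f : ℝ → ℝ} {D : ℝ}

lemma dyadic_le_of_midpoint_le
    (hmid : ∀ u ∈ Icc (0 : ℝ) 1, ∀ v ∈ Icc (0 : ℝ) 1, f ((u + v) / 2) ≤ (f u + f v) / 2)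
    (h0 : f 0 ≤ D) (h1 : f 1 ≤ D) (n : ℕ) : ∀ j : ℕ, j ≤ 2 ^ n → f (j / 2 ^ n) ≤ D := by
  have hmem : ∀ {n k : ℕ}, k ≤ 2 ^ n → (k : ℝ) / 2 ^ n ∈ Icc (0 : ℝ) 1 := fun hk =>
    ⟨by positivity, div_le_one_of_le₀ (by exact_mod_cast hk) (by positivity)⟩
  induction n with
  | zero =>
    intro j hj
    interval_cases j <;> simpa
  | succ n ih =>
    intro j hj
    obtain ⟨k, rfl | rfl⟩ := Nat.even_or_odd' j
    · have hk : ((2 * k : ℕ) : ℝ) / 2 ^ (n + 1) = k / 2 ^ n := by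
        push_cast; field_simp; ring
      rw [hk]
      exact ih k (by omega)
    · have hk : ((2 * k + 1 : ℕ) : ℝ) / 2 ^ (n + 1) =
          ((k : ℝ) / 2 ^ n + ((k + 1 : ℕ) : ℝ) / 2 ^ n) / 2 := by
        push_cast; field_simp; ring
      have hk₀ := ih k (by omega)
      have hk₁ := ih (k + 1) (by omega)
      rw [hk]
      linarith [hmid _ (hmem (by omega : k ≤ 2 ^ n)) _ (hmem (by omega : k + 1 ≤ 2 ^ n))]

lemma ContinuousOn.le_of_midpoint_le (hf : ContinuousOn f (Icc 0 1))
    (hmid : ∀ u ∈ Icc (0 : ℝ) 1, ∀ v ∈ Icc (0 : ℝ) 1, f ((u + v) / 2) ≤ (f u + f v) / 2)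
    (h0 : f 0 ≤ D) (h1 : f 1 ≤ D) {u : ℝ} (hu : u ∈ Icc (0 : ℝ) 1) : f u ≤ D := by
  have hfloor : ∀ n : ℕ, ⌊u * 2 ^ n⌋₊ ≤ 2 ^ n := fun n =>
    Nat.floor_le_of_le (by push_cast; nlinarith [hu.2, pow_pos (two_pos (α := ℝ)) n])
  have hdyadic : ∀ n : ℕ, (⌊u * 2 ^ n⌋₊ : ℝ) / 2 ^ n ∈ Icc (0 : ℝ) 1 := fun n =>
    ⟨by positivity, div_le_one_of_le₀ (by exact_mod_cast hfloor n) (by positivity)⟩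
  have hlim : Tendsto (fun n : ℕ => (⌊u * 2 ^ n⌋₊ : ℝ) / 2 ^ n) atTop (𝓝[Icc 0 1] u) :=
    tendsto_nhdsWithin_iff.2
      ⟨(tendsto_nat_floor_mul_div_atTop hu.1).comp
        (tendsto_pow_atTop_atTop_of_one_lt one_lt_two), Eventually.of_forall hdyadic⟩
  exact le_of_tendsto ((hf u hu).tendsto.comp hlim)
    (Eventually.of_forall fun n => dyadic_le_of_midpoint_le hmid h0 h1 n _ (hfloor n))

end MidpointConvex

section FellowTravel

variable {X : Type*} [MetricSpace X]

def FellowTravel (X : Type*) [MetricSpace X] (D K : ℝ) : Prop :=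
  ∀ ⦃L L' : ℝ⦄ ⦃σ τ : ℝ → X⦄, IsGeodesicOn σ (Icc 0 L) → IsGeodesicOn τ (Icc 0 L') →
    dist (σ 0) (τ 0) ≤ D → dist (σ L) (τ L') ≤ D →
    ∀ t, 0 ≤ t → t ≤ L → t ≤ L' → dist (σ t) (τ t) ≤ K

namespace CAT0

lemma dist_midpoints_le (hC : CAT0 X) {x y z m₁ m₂ : X}
    (h₁ : dist x m₁ = dist x y / 2) (h₁' : dist y m₁ = dist x y / 2)
    (h₂ : dist x m₂ = dist x z / 2) (h₂' : dist z m₂ = dist x z / 2) :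
    dist m₁ m₂ ≤ dist y z / 2 := by
  have hz := hC.2 z x y m₁ h₁ h₁'
  have hm := hC.2 m₁ x z m₂ h₂ h₂'
  rw [dist_comm m₁ x, h₁, dist_comm m₁ z] at hm
  rw [dist_comm z x, dist_comm z y] at hz
  exact (pow_le_pow_iff_left₀ dist_nonneg (by positivity) two_ne_zero).1 (by linarith)

lemma dist_midpoint_midpoint_le (hC : CAT0 X) {a b c d m₁ m₂ : X}
    (h₁ : dist a m₁ = dist a b / 2 ∧ dist b m₁ = dist a b / 2)
    (h₂ : dist c m₂ = dist c d / 2 ∧ dist d m₂ = dist c d / 2) :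
    dist m₁ m₂ ≤ (dist a c + dist b d) / 2 := by
  obtain ⟨ζ, hζ⟩ := hC.1 a d
  have hmem : dist a d / 2 ∈ Icc 0 (dist a d) :=
    ⟨by positivity, by linarith [dist_nonneg (x := a) (y := d)]⟩
  set m := ζ (dist a d / 2)
  have ha : dist a m = dist a d / 2 := hζ.dist_left hmem
  have hd : dist d m = dist a d / 2 := by rw [dist_comm, hζ.dist_right hmem]; ring
  have e₁ : dist m₁ m ≤ dist b d / 2 := hC.dist_midpoints_le h₁.1 h₁.2 ha hd
  have e₂ : dist m m₂ ≤ dist a c / 2 := by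
    rw [dist_comm a d] at ha hd
    rw [dist_comm c d] at h₂
    exact hC.dist_midpoints_le hd ha h₂.2 h₂.1
  linarith [dist_triangle m₁ m m₂]

lemma dist_mul_le (hC : CAT0 X) {L L' D : ℝ} (hL : 0 ≤ L) (hL' : 0 ≤ L') {σ τ : ℝ → X}
    (hσ : IsGeodesicOn σ (Icc 0 L)) (hτ : IsGeodesicOn τ (Icc 0 L'))
    (h0 : dist (σ 0) (τ 0) ≤ D) (h1 : dist (σ L) (τ L') ≤ D) {u : ℝ} (hu : u ∈ Icc (0 : ℝ) 1) :
    dist (σ (u * L)) (τ (u * L')) ≤ D := by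
  have hmaps : ∀ {M : ℝ}, 0 ≤ M → MapsTo (fun u => u * M) (Icc 0 1) (Icc 0 M) :=
    fun hM u hu => ⟨mul_nonneg hu.1 hM, mul_le_of_le_one_left hM hu.2⟩
  have hcont : ContinuousOn (fun u => dist (σ (u * L)) (τ (u * L'))) (Icc 0 1) :=
    continuous_dist.comp_continuousOn <|
      (hσ.lipschitzOnWith.continuousOn.comp (continuous_mul_const L).continuousOn
        (hmaps hL)).prodMk
      (hτ.lipschitzOnWith.continuousOn.comp (continuous_mul_const L').continuousOn (hmaps hL'))
  refine hcont.le_of_midpoint_le (fun u hu v hv => ?_) (by simpa using h0) (by simpa using h1) hu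
  have huv : (u + v) / 2 ∈ Icc (0 : ℝ) 1 :=
    ⟨by linarith [hu.1, hv.1], by linarith [hu.2, hv.2]⟩
  have key : ∀ M : ℝ, (u * M + v * M) / 2 = (u + v) / 2 * M := fun M => by ring
  have hσm := hσ.dist_midpoint (hmaps hL hu) (hmaps hL hv) (by rw [key]; exact hmaps hL huv)
  have hτm := hτ.dist_midpoint (hmaps hL' hu) (hmaps hL' hv) (by rw [key]; exact hmaps hL' huv)
  rw [key] at hσm hτm
  exact hC.dist_midpoint_midpoint_le hσm hτm

/-- The point of `τ` at the same proportion as `t` on `σ` is `D`-close to `σ t`, and its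
parameter `t / L * L'` differs from `t` by at most `|L - L'| ≤ 2 D`. -/
lemma fellowTravel (hC : CAT0 X) (D : ℝ) : FellowTravel X D (3 * D) := by
  intro L L' σ τ hσ hτ h0 h1 t ht htL htL'
  have hD : 0 ≤ D := dist_nonneg.trans h0
  rcases (ht.trans htL).eq_or_lt with hL | hL
  · obtain rfl : t = 0 := le_antisymm (hL ▸ htL) ht
    linarith
  have hL' : 0 ≤ L' := ht.trans htL'
  have hu : t / L ∈ Icc (0 : ℝ) 1 := ⟨by positivity, (div_le_one hL).2 htL⟩
  have hscale : t / L * L = t := div_mul_cancel₀ t hL.ne'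
  have hprop := hC.dist_mul_le hL.le hL' hσ hτ h0 h1 hu
  rw [hscale] at hprop
  have hLL' : |L - L'| ≤ 2 * D := by
    have := dist_dist_dist_le (σ 0) (σ L) (τ 0) (τ L')
    rw [hσ.dist_eq_sub ⟨le_rfl, hL.le⟩ ⟨hL.le, le_rfl⟩ hL.le,
      hτ.dist_eq_sub ⟨le_rfl, hL'⟩ ⟨hL', le_rfl⟩ hL', Real.dist_eq] at this
    simpa using this.trans (by linarith)
  have hpar : dist (τ (t / L * L')) (τ t) ≤ 2 * D := by
    rw [hτ _ ⟨by positivity, mul_le_of_le_one_left hL' hu.2⟩ _ ⟨ht, htL'⟩]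
    nth_rw 2 [← hscale]
    rw [← mul_sub, abs_mul, abs_of_nonneg hu.1, abs_sub_comm]
    exact (mul_le_of_le_one_left (abs_nonneg _) hu.2).trans hLL'
  linarith [dist_triangle (σ t) (τ (t / L * L')) (τ t)]

end CAT0

/-- The point `σ t` is `2δ + D`-close to `τ` by two applications of slimness, to the triangle
`σ 0, σ L, τ L'` and then to `τ L', σ 0, τ 0`; the parameters then match up to `D`. -/
lemma SlimTriangles.fellowTravel (hGeo : GeodesicSpace X) {δ : ℝ} (hδ : 0 ≤ δ)
    (hslim : SlimTriangles X δ) (D : ℝ) : FellowTravel X D (4 * δ + 3 * D) := by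
  intro L L' σ τ hσ hτ h0 h1 t ht htL htL'
  have hL' : 0 ≤ L' := ht.trans htL'
  have hnear : ∀ c, ∀ s ∈ Icc 0 L', dist (σ t) (τ s) ≤ c → dist (σ t) (τ t) ≤ 2 * c + D := by
    intro c s hs hc
    have hpar : |t - dist (τ 0) (σ t)| ≤ D := by
      have := abs_dist_sub_le (σ 0) (τ 0) (σ t)
      rw [hσ.dist_eq_sub ⟨le_rfl, ht.trans htL⟩ ⟨ht, htL⟩ ht, sub_zero] at this
      linarith
    linarith [hτ.dist_le_two_mul_add hs ⟨ht, htL'⟩ (σ t)]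
  suffices ∃ s ∈ Icc 0 L', dist (σ t) (τ s) ≤ 2 * δ + D by
    obtain ⟨s, hs, hst⟩ := this
    linarith [hnear _ s hs hst]
  have hσL := hσ.isGeodesicSegment (ht.trans htL)
  have hτL := hτ.isGeodesicSegment hL'
  have hdσ : dist (σ 0) (σ L) = L := by
    rw [hσ.dist_eq_sub ⟨le_rfl, ht.trans htL⟩ ⟨ht.trans htL, le_rfl⟩ (ht.trans htL), sub_zero]
  have hdτ : dist (τ 0) (τ L') = L' := by
    rw [hτ.dist_eq_sub ⟨le_rfl, hL'⟩ ⟨hL', le_rfl⟩ hL', sub_zero]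
  obtain ⟨γ₂, hγ₂⟩ := hGeo (σ L) (τ L')
  obtain ⟨γ₃, hγ₃⟩ := hGeo (τ L') (σ 0)
  obtain ⟨p, hp, hσp⟩ := hslim _ _ _ σ γ₂ γ₃ hσL hγ₂ hγ₃ t ⟨ht, by rwa [hdσ]⟩
  rcases hp with ⟨u, hu, rfl⟩ | ⟨u, hu, rfl⟩
  · refine ⟨L', ⟨hL', le_rfl⟩, ?_⟩
    have := hγ₂.dist_right hu
    linarith [dist_triangle (σ t) (γ₂ u) (τ L'), hu.1]
  obtain ⟨η, hη⟩ := hGeo (σ 0) (τ 0)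
  obtain ⟨q, hq, hpq⟩ := hslim _ _ _ γ₃ η τ hγ₃ hη hτL u hu
  have hσq : dist (σ t) q ≤ 2 * δ := by linarith [dist_triangle (σ t) (γ₃ u) q]
  rcases hq with ⟨w, hw, rfl⟩ | ⟨w, hw, rfl⟩
  · refine ⟨0, ⟨le_rfl, hL'⟩, ?_⟩
    have := hη.dist_right hw
    linarith [dist_triangle (σ t) (η w) (τ 0), hw.1]
  · exact ⟨w, hdτ ▸ hw, by linarith [dist_nonneg.trans h0]⟩

lemma NPCSpace.exists_fellowTravel (hNPC : NPCSpace X) (D : ℝ) : ∃ K, FellowTravel X D K := by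
  rcases hNPC.2 with ⟨_, hC⟩ | ⟨_, δ, hδ, hslim⟩
  · exact ⟨_, hC.fellowTravel D⟩
  · exact ⟨_, hslim.fellowTravel hNPC.1 hδ D⟩

end FellowTravel

section SlimTriangles

variable {X : Type*} [MetricSpace X]

lemma SlimTriangles.exists_near_quadrilateral (hGeo : GeodesicSpace X) {δ : ℝ} (hδ : 0 ≤ δ)
    (hslim : SlimTriangles X δ) {a b c d : X} {Λ η₁ η₂ ν : ℝ → X}
    (hΛ : IsGeodesicSegment Λ 0 (dist a b) a b) (hη₂ : IsGeodesicSegment η₂ 0 (dist b c) b c)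
    (hη₁ : IsGeodesicSegment η₁ 0 (dist a d) a d) (hν : IsGeodesicSegment ν 0 (dist d c) d c)
    {v : ℝ} (hv : v ∈ Icc 0 (dist a b)) :
    ∃ p ∈ η₂ '' Icc 0 (dist b c) ∪ η₁ '' Icc 0 (dist a d) ∪ ν '' Icc 0 (dist d c),
      dist (Λ v) p ≤ 2 * δ := by
  obtain ⟨ζ, hζ⟩ := hGeo c a
  obtain ⟨p, hp, hΛp⟩ := hslim a b c Λ η₂ ζ hΛ hη₂ hζ v hv
  rcases hp with hp | ⟨u, hu, rfl⟩
  · exact ⟨p, Or.inl (Or.inl hp), by linarith⟩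
  obtain ⟨q, hq, hpq⟩ := hslim c a d ζ η₁ ν hζ hη₁ hν u hu
  refine ⟨q, ?_, by linarith [dist_triangle (Λ v) (ζ u) q]⟩
  rcases hq with hq | hq
  · exact Or.inl (Or.inr hq)
  · exact Or.inr hq

/-- `Λ v` is `2δ`-close to a side of the quadrilateral `y₁ y₂ w₂ w₁`; a point `p` on the side
`y_k w_k` would give `infDist x Γ ≤ dist x p + dist p w_k < infDist x Γ`. -/
lemma SlimTriangles.infDist_le_of_far_ends (hGeo : GeodesicSpace X) {δ : ℝ} (hδ : 0 ≤ δ)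
    (hslim : SlimTriangles X δ) {Γ : Set X} {x y₁ y₂ w₁ w₂ : X} (hw₁ : w₁ ∈ Γ) (hw₂ : w₂ ∈ Γ)
    (hyw₁ : dist y₁ w₁ ≤ infDist x Γ) (hyw₂ : dist y₂ w₂ ≤ infDist x Γ) {ν : ℝ → X}
    (hν : IsGeodesicSegment ν 0 (dist w₁ w₂) w₁ w₂) (hνΓ : ν '' Icc 0 (dist w₁ w₂) ⊆ Γ)
    {Λ : ℝ → X} (hΛ : IsGeodesicSegment Λ 0 (dist y₁ y₂) y₁ y₂) {v : ℝ}
    (hv : v ∈ Icc 0 (dist y₁ y₂)) {Q : ℝ} (hxΛ : dist x (Λ v) ≤ Q)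
    (hfar₁ : 2 * (Q + 2 * δ) < dist x y₁) (hfar₂ : 2 * (Q + 2 * δ) < dist x y₂) :
    infDist x Γ ≤ Q + 2 * δ := by
  obtain ⟨η₁, hη₁⟩ := hGeo y₁ w₁
  obtain ⟨η₂, hη₂⟩ := hGeo y₂ w₂
  obtain ⟨p, hp, hΛp⟩ := hslim.exists_near_quadrilateral hGeo hδ hΛ hη₂ hη₁ hν hv
  have hxp : dist x p ≤ Q + 2 * δ := by linarith [dist_triangle x (Λ v) p]
  rcases hp with (⟨u, hu, rfl⟩ | ⟨u, hu, rfl⟩) | ⟨u, hu, rfl⟩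
  · linarith [hη₂.infDist_le hw₂ hu x]
  · linarith [hη₁.infDist_le hw₁ hu x]
  · exact (infDist_le_dist_of_mem (hνΓ ⟨u, hu, rfl⟩)).trans hxp

/-- Halve the chain and use a slim triangle: each halving costs `δ`. -/
lemma SlimTriangles.exists_dist_chain_le (hGeo : GeodesicSpace X) {δ s : ℝ} (hδ : 0 ≤ δ)
    (hs : 0 ≤ s) (hslim : SlimTriangles X δ) (m : ℕ) {z : ℕ → X}
    (hz : ∀ i, dist (z i) (z (i + 1)) ≤ s) {σ : ℝ → X}
    (hσ : IsGeodesicSegment σ 0 (dist (z 0) (z m)) (z 0) (z m)) {t : ℝ}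
    (ht : t ∈ Icc 0 (dist (z 0) (z m))) :
    ∃ i ≤ m, dist (σ t) (z i) ≤ δ * Nat.clog 2 m + s := by
  induction m using Nat.strong_induction_on generalizing z σ t with
  | _ m ih =>
  have hlog : 0 ≤ δ * Nat.clog 2 m := by positivity
  rcases lt_or_ge m 2 with hm | hm
  · have hm' : dist (z 0) (z m) ≤ s := by interval_cases m <;> simp [hs, hz 0]
    refine ⟨0, Nat.zero_le _, ?_⟩
    rw [dist_comm, hσ.dist_left ht]
    linarith [ht.2]
  set k := m / 2
  have hclog : Nat.clog 2 m = Nat.clog 2 ((m + 1) / 2) + 1 := Nat.clog_of_two_le one_lt_two hm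
  have hstep : ∀ n, Nat.clog 2 n ≤ Nat.clog 2 ((m + 1) / 2) → ∀ p i,
      dist (σ t) p ≤ δ → dist p (z i) ≤ δ * Nat.clog 2 n + s →
      dist (σ t) (z i) ≤ δ * Nat.clog 2 m + s := by
    intro n hn p i h₁ h₂
    have : (Nat.clog 2 n : ℝ) + 1 ≤ Nat.clog 2 m := by rw [hclog]; push_cast; gcongr
    nlinarith [dist_triangle (σ t) p (z i), mul_le_mul_of_nonneg_left this hδ]
  obtain ⟨γ₂, hγ₂⟩ := hGeo (z m) (z k)
  obtain ⟨γ₃, hγ₃⟩ := hGeo (z k) (z 0)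
  obtain ⟨p, hp, hσp⟩ := hslim _ _ _ σ γ₂ γ₃ hσ hγ₂ hγ₃ t ht
  rcases hp with ⟨u, hu, rfl⟩ | ⟨u, hu, rfl⟩
  · have hmk : k + (m - k) = m := by omega
    obtain ⟨i, hi, hdi⟩ := ih (m - k) (by omega) (z := fun i => z (k + i)) (fun i => hz (k + i))
      (σ := fun v => γ₂ (dist (z m) (z k) - v)) (by simpa only [add_zero, hmk] using hγ₂.symm)
      (t := dist (z m) (z k) - u)
      (by simp only [add_zero, hmk, dist_comm (z k)]
          exact ⟨by linarith [hu.2], by linarith [hu.1]⟩)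
    refine ⟨k + i, by omega, hstep (m - k) (Nat.clog_mono_right _ (by omega)) _ _ hσp ?_⟩
    simpa using hdi
  · obtain ⟨i, hi, hdi⟩ := ih k (by omega) hz hγ₃.symm (t := dist (z k) (z 0) - u)
      (by rw [dist_comm (z 0)]; exact ⟨by linarith [hu.2], by linarith [hu.1]⟩)
    refine ⟨i, by omega, hstep k (Nat.clog_mono_right _ (by omega)) _ _ hσp ?_⟩
    simpa using hdi

end SlimTriangles

lemma exists_add_mul_lt_two_pow (A B : ℝ) : ∃ j : ℕ, A + B * j < 2 ^ j := by
  have hlim : Tendsto (fun j : ℕ => A * (1 / 2) ^ j + B * ((j : ℝ) ^ 1 / 2 ^ j)) atTop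
      (𝓝 (A * 0 + B * 0)) :=
    ((tendsto_pow_atTop_nhds_zero_of_lt_one (by norm_num) (by norm_num)).const_mul A).add
      ((tendsto_pow_const_div_const_pow_of_one_lt 1 one_lt_two).const_mul B)
  obtain ⟨j, hj⟩ := (hlim.eventually (gt_mem_nhds (by norm_num : A * 0 + B * 0 < 1))).exists
  refine ⟨j, ?_⟩
  have h2 : (0 : ℝ) < 2 ^ j := by positivity
  rw [show A * (1 / 2) ^ j + B * ((j : ℝ) ^ 1 / 2 ^ j) = (A + B * j) / 2 ^ j by
    rw [one_div_pow, pow_one]; field_simp, div_lt_one h2] at hj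
  exact hj

section QuasiGeodesic

variable {X : Type*} [MetricSpace X]

def IsQuasiGeodesicSeq (a b : ℝ) (z : ℕ → X) : Prop :=
  ∀ i j : ℕ, a⁻¹ * |(i : ℝ) - j| - b ≤ dist (z i) (z j) ∧ dist (z i) (z j) ≤ a * |(i : ℝ) - j| + b

namespace IsQuasiGeodesicSeq

variable {a b : ℝ} {z : ℕ → X}

lemma shift (hz : IsQuasiGeodesicSeq a b z) (k : ℕ) :
    IsQuasiGeodesicSeq a b (fun i => z (k + i)) := fun i j => by
  simpa using hz (k + i) (k + j)

lemma dist_succ_le (hz : IsQuasiGeodesicSeq a b z) (i : ℕ) : dist (z i) (z (i + 1)) ≤ a + b := by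
  simpa using (hz i (i + 1)).2

lemma dist_le_of_le_of_le (hz : IsQuasiGeodesicSeq a b z) (ha : 0 < a) {i j k : ℕ}
    (hji : j ≤ i) (hik : i ≤ k) : dist (z i) (z j) ≤ a * (a * (dist (z j) (z k) + b)) + b := by
  have hjk : (k : ℝ) - j ≤ a * (dist (z j) (z k) + b) := by
    have := (hz j k).1
    rw [abs_sub_comm, abs_of_nonneg (by simp; omega)] at this
    calc (k : ℝ) - j = a * (a⁻¹ * (k - j)) := by field_simp
      _ ≤ a * (dist (z j) (z k) + b) := by gcongr; linarith
  have := (hz i j).2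
  rw [abs_of_nonneg (by simp; omega)] at this
  nlinarith [show (i : ℝ) ≤ k by exact_mod_cast hik]

/-- Follow the geodesic up to the last point that is `E`-close to the chain before `z i`: the
chain points near the geodesic just beyond it come after `z i`, and quasi-geodesicity traps
`z i` between the two. -/
lemma dist_le_of_abs_sub_le (hz : IsQuasiGeodesicSeq a b z) (ha : 0 < a) {i j : ℕ} {r : ℝ}
    (h : |(i : ℝ) - j| ≤ r) : dist (z i) (z j) ≤ a * r + b :=
  (hz i j).2.trans (by linarith [mul_le_mul_of_nonneg_left h ha.le])

lemma le_dist_of_le_abs_sub (hz : IsQuasiGeodesicSeq a b z) (ha : 0 < a) {i j : ℕ} {r : ℝ}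
    (h : r ≤ |(i : ℝ) - j|) : a⁻¹ * r - b ≤ dist (z i) (z j) :=
  le_trans (by linarith [mul_le_mul_of_nonneg_left h (inv_nonneg.2 ha.le)]) (hz i j).1

lemma exists_dist_le_of_chain_near (hz : IsQuasiGeodesicSeq a b z) (ha : 0 < a) {m : ℕ}
    {σ : ℝ → X} (hσ : IsGeodesicSegment σ 0 (dist (z 0) (z m)) (z 0) (z m)) {E : ℝ}
    (hnear : ∀ t ∈ Icc 0 (dist (z 0) (z m)), ∃ k ≤ m, dist (σ t) (z k) ≤ E)
    {i : ℕ} (hi : i ≤ m) :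
    ∃ u ∈ Icc 0 (dist (z 0) (z m)), dist (z i) (σ u) ≤ a * (a * (2 * E + 2 + b)) + b + E := by
  set T := dist (z 0) (z m)
  have hT : 0 ≤ T := dist_nonneg
  have hE : 0 ≤ E := by
    obtain ⟨k, -, hk⟩ := hnear 0 ⟨le_rfl, hT⟩
    exact dist_nonneg.trans hk
  set S := {t | t ∈ Icc 0 T ∧ ∃ j ≤ i, dist (σ t) (z j) ≤ E}
  have h0S : (0 : ℝ) ∈ S := ⟨⟨le_rfl, hT⟩, 0, Nat.zero_le _, by rw [hσ.2.1, dist_self]; exact hE⟩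
  have hbdd : BddAbove S := ⟨T, fun t ht => ht.1.2⟩
  obtain ⟨t₁, ⟨ht₁, j, hji, hj⟩, ht₁gt⟩ := exists_lt_of_lt_csSup ⟨0, h0S⟩
    (show sSup S - 1 < sSup S by linarith)
  have hsup₀ : 0 ≤ sSup S := le_csSup hbdd h0S
  have hfar : ∃ k, i ≤ k ∧ k ≤ m ∧ dist (z j) (z k) ≤ 2 * E + 2 := by
    rcases le_or_gt T (sSup S + 1) with hT₁ | hT₁
    · refine ⟨m, hi, le_rfl, ?_⟩
      have := hσ.dist_right ht₁
      linarith [dist_triangle (z j) (σ t₁) (z m), dist_comm (z j) (σ t₁)]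
    · have ht₂ : sSup S + 1 ∈ Icc 0 T := ⟨by linarith, hT₁.le⟩
      obtain ⟨k, hkm, hk⟩ := hnear _ ht₂
      have hik : i < k := by
        by_contra! hki
        linarith [le_csSup hbdd ⟨ht₂, k, hki, hk⟩]
      have := hσ.2.2.2.dist_eq_sub ht₁ ht₂ (by linarith [le_csSup hbdd ⟨ht₁, j, hji, hj⟩])
      refine ⟨k, hik.le, hkm, ?_⟩
      linarith [dist_triangle4 (z j) (σ t₁) (σ (sSup S + 1)) (z k), dist_comm (z j) (σ t₁)]
  obtain ⟨k, hik, hkm, hjk⟩ := hfar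
  refine ⟨t₁, ht₁, ?_⟩
  have hij := hz.dist_le_of_le_of_le ha hji hik
  have : a * (a * (dist (z j) (z k) + b)) ≤ a * (a * (2 * E + 2 + b)) := by gcongr
  linarith [dist_triangle (z i) (z j) (σ t₁), dist_comm (z j) (σ t₁)]

/-- At a chain point `z i₀` farthest from the geodesic, either `z i₀` is within `r` steps of an
end of the chain, or the bound `Q` at the middle of the sub-chain from `z (i₀ - r)` to
`z (i₀ + r)` applies. -/
lemma exists_dist_le_of_midpoints_near (hGeo : GeodesicSpace X) {δ : ℝ} (hδ : 0 ≤ δ)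
    (hslim : SlimTriangles X δ) (hz : IsQuasiGeodesicSeq a b z) (ha : 0 < a) {r : ℕ} {Q : ℝ}
    (hQ : ∀ (k : ℕ) (Λ : ℝ → X),
      IsGeodesicSegment Λ 0 (dist (z k) (z (k + 2 * r))) (z k) (z (k + 2 * r)) →
      ∃ v ∈ Icc 0 (dist (z k) (z (k + 2 * r))), dist (z (k + r)) (Λ v) ≤ Q)
    (hr : a * (2 * (Q + 2 * δ) + b) < r) {m : ℕ} {σ : ℝ → X}
    (hσ : IsGeodesicSegment σ 0 (dist (z 0) (z m)) (z 0) (z m)) {i : ℕ} (hi : i ≤ m) :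
    ∃ u ∈ Icc 0 (dist (z 0) (z m)), dist (z i) (σ u) ≤ max (a * r + b) (Q + 2 * δ) := by
  set Γ := σ '' Icc 0 (dist (z 0) (z m))
  have hΓ : IsCompact Γ := hσ.2.2.2.isCompact_image
  have hz₀ : z 0 ∈ Γ := ⟨0, ⟨le_rfl, dist_nonneg⟩, hσ.2.1⟩
  suffices hF : ∀ i ≤ m, infDist (z i) Γ ≤ max (a * r + b) (Q + 2 * δ) by
    obtain ⟨_, ⟨u, hu, rfl⟩, hzu⟩ := hΓ.exists_infDist_eq_dist ⟨_, hz₀⟩ (z i)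
    exact ⟨u, hu, hzu ▸ hF i hi⟩
  obtain ⟨i₀, hi₀, hmax⟩ := (Finset.range (m + 1)).exists_max_image (fun i => infDist (z i) Γ)
    ⟨0, Finset.mem_range.2 m.succ_pos⟩
  rw [Finset.mem_range, Nat.lt_succ_iff] at hi₀
  replace hmax : ∀ i ≤ m, infDist (z i) Γ ≤ infDist (z i₀) Γ := fun i hi =>
    hmax i (Finset.mem_range.2 (Nat.lt_succ_of_le hi))
  refine fun i hi => (hmax i hi).trans ?_
  have hi₀m : (i₀ : ℝ) ≤ m := by exact_mod_cast hi₀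
  rcases lt_or_ge i₀ r with hi₀r | hi₀r
  · have : |(i₀ : ℝ) - (0 : ℕ)| ≤ r := by simpa using hi₀r.le
    exact le_max_of_le_left ((infDist_le_dist_of_mem hz₀).trans (hz.dist_le_of_abs_sub_le ha this))
  rcases lt_or_ge m (i₀ + r) with hmr | hmr
  · have : (m : ℝ) < i₀ + r := by exact_mod_cast hmr
    have hzm : z m ∈ Γ := ⟨_, ⟨dist_nonneg, le_rfl⟩, hσ.2.2.1⟩
    exact le_max_of_le_left ((infDist_le_dist_of_mem hzm).trans
      (hz.dist_le_of_abs_sub_le ha (abs_sub_le_iff.2 ⟨by linarith, by linarith⟩)))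
  set k := i₀ - r
  have hkr : (i₀ : ℝ) = k + r := by exact_mod_cast (Nat.sub_add_cancel hi₀r).symm
  obtain ⟨Λ, hΛ⟩ := hGeo (z k) (z (k + 2 * r))
  obtain ⟨v, hv, hΛv⟩ := hQ k Λ hΛ
  rw [Nat.sub_add_cancel hi₀r] at hΛv
  obtain ⟨_, ⟨u₁, hu₁, rfl⟩, hkw₁⟩ := hΓ.exists_infDist_eq_dist ⟨_, hz₀⟩ (z k)
  obtain ⟨_, ⟨u₂, hu₂, rfl⟩, hkw₂⟩ := hΓ.exists_infDist_eq_dist ⟨_, hz₀⟩ (z (k + 2 * r))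
  obtain ⟨ν, hν, hνΓ⟩ := hσ.2.2.2.exists_subsegment hu₁ hu₂
  have hrQ : 2 * (Q + 2 * δ) < a⁻¹ * r - b := by linarith [(lt_inv_mul_iff₀ ha).2 hr]
  exact le_max_of_le_right <| hslim.infDist_le_of_far_ends hGeo hδ (mem_image_of_mem σ hu₁)
    (mem_image_of_mem σ hu₂) (hkw₁ ▸ hmax k (by omega)) (hkw₂ ▸ hmax _ (by omega)) hν hνΓ hΛ hv
    hΛv (hrQ.trans_le (hz.le_dist_of_le_abs_sub ha (le_abs.2 (Or.inl (by linarith)))))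
    (hrQ.trans_le (hz.le_dist_of_le_abs_sub ha (le_abs.2 (Or.inr (by push_cast; linarith)))))

/-- The Morse lemma. The bootstrap applies with `r = 2 ^ j` for large `j`, since the bound `Q`
for sub-chains of length `2r` only grows linearly in `j`. -/
lemma exists_near_geodesic (hGeo : GeodesicSpace X) {δ : ℝ} (hδ : 0 ≤ δ)
    (hslim : SlimTriangles X δ) (hz : IsQuasiGeodesicSeq a b z) (ha : 0 < a) :
    ∃ H, ∀ (m : ℕ) (σ : ℝ → X), IsGeodesicSegment σ 0 (dist (z 0) (z m)) (z 0) (z m) →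
      ∀ i ≤ m, ∃ u ∈ Icc 0 (dist (z 0) (z m)), dist (z i) (σ u) ≤ H := by
  have hs : 0 ≤ a + b := dist_nonneg.trans (hz.dist_succ_le 0)
  set c := 4 * a ^ 3 + 2 * a
  obtain ⟨j, hj⟩ := exists_add_mul_lt_two_pow
    ((δ + (a + b)) * c + 2 * a ^ 3 * (2 + b) + 3 * a * b + 4 * a * δ) (δ * c)
  set E := δ * Nat.clog 2 (2 * 2 ^ j) + (a + b)
  set Q := a * (a * (2 * E + 2 + b)) + b + E
  refine ⟨_, fun m σ hσ i hi =>
    hz.exists_dist_le_of_midpoints_near hGeo hδ hslim ha (r := 2 ^ j) (Q := Q) ?_ ?_ hσ hi⟩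
  · intro k Λ hΛ
    exact (hz.shift k).exists_dist_le_of_chain_near ha hΛ
      (fun t ht => hslim.exists_dist_chain_le hGeo hδ hs _ (fun i => hz.dist_succ_le (k + i)) hΛ ht)
      (i := 2 ^ j) (by omega)
  · have hlog : Nat.clog 2 (2 * 2 ^ j) = j + 1 := by
      rw [← pow_succ', Nat.clog_pow _ _ one_lt_two]
    calc a * (2 * (Q + 2 * δ) + b)
        = (δ + (a + b)) * c + 2 * a ^ 3 * (2 + b) + 3 * a * b + 4 * a * δ + δ * c * j := by
          simp only [Q, E, c, hlog]; push_cast; ring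
      _ < _ := by exact_mod_cast hj

end IsQuasiGeodesicSeq

end QuasiGeodesic

lemma pow_smul_eq_add_mul {X G : Type*} [Group G] [MulAction G X] {g : G} {γ : ℝ → X} {k : ℝ}
    (hk : ∀ t, g • γ t = γ (t + k)) (n : ℕ) (t : ℝ) : g ^ n • γ t = γ (t + n * k) := by
  induction n generalizing t with
  | zero => simp
  | succ n ih => rw [pow_succ, mul_smul, hk, ih]; push_cast; ring_nf

section Action

variable {X G : Type*} [MetricSpace X] [Group G] [MulAction G X]

lemma dist_conj_smul (hiso : IsometricAction G X) (h x : G) (p : X) :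
    dist ((h⁻¹ * x * h) • p) p = dist (x • h • p) (h • p) := by
  rw [← (hiso h).dist_eq, mul_smul, mul_smul, smul_inv_smul]

section Parabolic

variable [TopologicalSpace G]

lemma mem_parSet_inv_iff {g x : G} :
    x ∈ parSet g⁻¹ ↔ IsCompact (closure (range fun n : ℕ => (g ^ n)⁻¹ * x * g ^ n)) := by
  simp [parSet, inv_pow]

lemma exists_dist_smul_orbit_le_of_mem_parSet [ContinuousSMul G X] (hiso : IsometricAction G X)
    {g x : G} (hx : x ∈ parSet g⁻¹) (p : X) :
    ∃ C, ∀ n : ℕ, dist (x • g ^ n • p) (g ^ n • p) ≤ C := by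
  rw [mem_parSet_inv_iff] at hx
  obtain ⟨C, hC⟩ := (hx.image (continuous_id.smul continuous_const :
    Continuous fun h : G => h • p)).isBounded.subset_closedBall p
  exact ⟨C, fun n => by
    rw [← dist_conj_smul hiso]; exact hC ⟨_, subset_closure ⟨n, rfl⟩, rfl⟩⟩

lemma mem_parSet_inv_of_dist_smul_orbit_le [R1Space G] (hiso : IsometricAction G X)
    (hproper : ProperAction G X) {g x : G} {p : X} {C : ℝ}
    (hC : ∀ n : ℕ, dist (x • g ^ n • p) (g ^ n • p) ≤ C) : x ∈ parSet g⁻¹ := by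
  rw [mem_parSet_inv_iff]
  refine (hproper p C).closure_of_subset (range_subset_iff.2 fun n => ?_)
  show dist _ _ ≤ C
  rw [dist_conj_smul hiso]
  exact hC n

lemma mem_parSet_inv_of_asympRays [R1Space G] (hiso : IsometricAction G X)
    (hproper : ProperAction G X) {g x : G} {γ : ℝ → X} (hx : AsympRays (fun t => x • γ t) γ)
    {p : X} {B : ℝ} (hB : ∀ n : ℕ, ∃ t, 0 ≤ t ∧ dist (g ^ n • p) (γ t) ≤ B) :
    x ∈ parSet g⁻¹ := by
  obtain ⟨C, hC⟩ := hx
  refine mem_parSet_inv_of_dist_smul_orbit_le hiso hproper (p := p) (C := B + C + B) fun n => ?_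
  obtain ⟨t, ht, hnt⟩ := hB n
  calc dist (x • g ^ n • p) (g ^ n • p)
      ≤ dist (x • g ^ n • p) (x • γ t) + dist (x • γ t) (γ t) + dist (γ t) (g ^ n • p) :=
        dist_triangle4 _ _ _ _
    _ ≤ B + C + B := by
        rw [(hiso x).dist_eq, dist_comm (γ t)]
        linarith [hC t ht]

end Parabolic

namespace AttractsTo

variable {g : G} {γ : ℝ → X}

lemma asympRays_of_dist_smul_orbit_le (hattr : AttractsTo g γ) (hGeo : GeodesicSpace X)
    (hiso : IsometricAction G X) {D K : ℝ} (hK : FellowTravel X D K) {x : G}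
    (hD : ∀ n : ℕ, dist (x • g ^ n • γ 0) (g ^ n • γ 0) ≤ D) :
    AsympRays (fun t => x • γ t) γ := by
  obtain ⟨htend, C, hC⟩ := hattr.2 (γ 0)
  choose σ hσ using fun n : ℕ => hGeo (γ 0) (g ^ n • γ 0)
  refine ⟨C + K + C, fun t ht => ?_⟩
  obtain ⟨n, hσγ, htn⟩ := ((hC t ht σ hσ).and (htend.eventually_ge_atTop t)).exists
  have hxσ : dist (σ n t) (x • σ n t) ≤ K := by
    refine hK (hσ n).2.2.2 ((hσ n).2.2.2.comp_isometry (hiso x)) ?_ ?_ t ht htn htn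
    · simpa [(hσ n).2.1, dist_comm] using hD 0
    · rw [(hσ n).2.2.1, dist_comm]; exact hD n
  calc dist (x • γ t) (γ t) ≤ dist (x • γ t) (x • σ n t) + dist (x • σ n t) (σ n t) +
        dist (σ n t) (γ t) := dist_triangle4 _ _ _ _
    _ ≤ C + K + C := by
        rw [(hiso x).dist_eq, dist_comm (γ t), dist_comm (x • σ n t)]
        linarith

lemma asympRays_of_isAxialWith (hattr : AttractsTo g γ) (hGeo : GeodesicSpace X)
    {γ' : ℝ → X} (hax : IsAxialWith g γ') {K : ℝ} (hK : FellowTravel X (dist (γ 0) (γ' 0)) K) :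
    AsympRays γ γ' := by
  obtain ⟨hline, k, hk, hkt⟩ := hax
  obtain ⟨htend, C, hC⟩ := hattr.2 (γ' 0)
  choose σ hσ using fun n : ℕ => hGeo (γ 0) (g ^ n • γ' 0)
  have horbit : ∀ n : ℕ, g ^ n • γ' 0 = γ' (n * k) := fun n => by
    rw [pow_smul_eq_add_mul hkt, zero_add]
  refine ⟨C + K, fun t ht => ?_⟩
  have hnk : ∀ᶠ n : ℕ in atTop, t ≤ n * k :=
    (tendsto_natCast_atTop_atTop.atTop_mul_const hk).eventually_ge_atTop t
  obtain ⟨n, ⟨hσγ, htn⟩, htk⟩ := (((hC t ht σ hσ).and (htend.eventually_ge_atTop t)).and hnk).exists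
  have hσγ' : dist (σ n t) (γ' t) ≤ K := by
    refine hK (hσ n).2.2.2 (hline.mono (subset_univ _)) ?_ ?_ t ht htn htk
    · rw [(hσ n).2.1]
    · rw [(hσ n).2.2.1, horbit, dist_self]; exact dist_nonneg
  linarith [dist_triangle (γ t) (σ n t) (γ' t), dist_comm (γ t) (σ n t)]

/-- By the Morse lemma `gⁿ p` is close to the geodesic from `p` to `gᵐ p`, which fellow-travels
the geodesic from `γ 0` to `gᵐ p`, and the latter is close to `γ` for `m` large. -/
lemma exists_orbit_near_of_isQuasiGeodesicSeq (hattr : AttractsTo g γ) (hGeo : GeodesicSpace X)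
    {δ : ℝ} (hδ : 0 ≤ δ) (hslim : SlimTriangles X δ) {p : X} {a b : ℝ} (ha : 0 < a)
    (hz : IsQuasiGeodesicSeq a b fun n : ℕ => g ^ n • p) :
    ∃ B, ∀ n : ℕ, ∃ t, 0 ≤ t ∧ dist (g ^ n • p) (γ t) ≤ B := by
  set z : ℕ → X := fun n => g ^ n • p
  obtain ⟨H, hH⟩ := hz.exists_near_geodesic hGeo hδ hslim ha
  have hK := hslim.fellowTravel hGeo hδ (dist (z 0) (γ 0))
  obtain ⟨htend, C, hC⟩ := hattr.2 p
  choose Γ hΓ using fun m : ℕ => hGeo (z 0) (z m)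
  choose σ hσ using fun m : ℕ => hGeo (γ 0) (z m)
  refine ⟨2 * H + (4 * δ + 3 * dist (z 0) (γ 0)) + C, fun n => ?_⟩
  set A := dist (z 0) (z n)
  refine ⟨A, dist_nonneg, ?_⟩
  obtain ⟨m, ⟨hσγ, hAm⟩, hnm⟩ := (((hC A dist_nonneg σ hσ).and
    (htend.eventually_ge_atTop (A + dist (γ 0) (z 0)))).and (eventually_ge_atTop n)).exists
  have hAΓ : A ∈ Icc 0 (dist (z 0) (z m)) :=
    ⟨dist_nonneg, by linarith [dist_triangle (γ 0) (z 0) (z m)]⟩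
  have hAσ : A ≤ dist (γ 0) (z m) := by linarith [dist_nonneg (x := γ 0) (y := z 0)]
  obtain ⟨u, hu, hnu⟩ := hH m (Γ m) (hΓ m) n hnm
  have hnA : dist (z n) (Γ m A) ≤ 2 * H := by
    have := (hΓ m).2.2.2.dist_le_two_mul_add hu hAΓ (z n)
    simp only [(hΓ m).2.1, A, sub_self, abs_zero, add_zero] at this
    linarith
  have hΓσ : dist (Γ m A) (σ m A) ≤ 4 * δ + 3 * dist (z 0) (γ 0) := by
    refine hK (hΓ m).2.2.2 (hσ m).2.2.2 ?_ ?_ A dist_nonneg hAΓ.2 hAσ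
    · rw [(hΓ m).2.1, (hσ m).2.1]
    · rw [(hΓ m).2.2.1, (hσ m).2.2.1, dist_self]; exact dist_nonneg
  linarith [dist_triangle4 (z n) (Γ m A) (σ m A) (γ A)]

end AttractsTo

lemma QIHyperbolic.exists_isQuasiGeodesicSeq {g : G} (h : QIHyperbolic X g) :
    ∃ (p : X) (a b : ℝ), 0 < a ∧ IsQuasiGeodesicSeq a b fun n : ℕ => g ^ n • p := by
  obtain ⟨p, a, b, ha, -, hab⟩ := h
  exact ⟨p, a, b, ha, fun i j => by simpa using hab i j⟩

lemma IsHyperbolicIsom.exists_orbit_near (hNPC : NPCSpace X) {g : G} {γ : ℝ → X}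
    (hattr : AttractsTo g γ) (hhyp : IsHyperbolicIsom X g) :
    ∃ (p : X) (B : ℝ), ∀ n : ℕ, ∃ t, 0 ≤ t ∧ dist (g ^ n • p) (γ t) ≤ B := by
  rcases hhyp with ⟨-, -, γ', hax⟩ | ⟨-, ⟨δ, hδ, hslim⟩, hqi⟩
  · obtain ⟨K, hK⟩ := hNPC.exists_fellowTravel (dist (γ 0) (γ' 0))
    obtain ⟨B, hB⟩ := hattr.asympRays_of_isAxialWith hNPC.1 hax hK
    obtain ⟨-, k, hk, hkt⟩ := hax
    refine ⟨γ' 0, B, fun n => ⟨n * k, by positivity, ?_⟩⟩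
    rw [pow_smul_eq_add_mul hkt, zero_add, dist_comm]
    exact hB _ (by positivity)
  · obtain ⟨p, a, b, ha, hz⟩ := hqi.exists_isQuasiGeodesicSeq
    exact ⟨p, hattr.exists_orbit_near_of_isQuasiGeodesicSeq hNPC.1 hδ hslim ha hz⟩

end Action

theorem parabolic_le_endStabilizer_general
    {X G : Type*} [MetricSpace X] [Group G] [TopologicalSpace G]
    [T2Space G]
    [MulAction G X] [ContinuousSMul G X]
    (hNPC : NPCSpace X) (hiso : IsometricAction G X)
    (g : G) (γ : ℝ → X)
    (hattr : AttractsTo g γ) :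
    parSet g⁻¹ ⊆ (endStabilizer hiso γ : Set G) ∧
    (IsHyperbolicIsom X g → ProperAction G X →
      parSet g⁻¹ = (endStabilizer hiso γ : Set G)) := by
  have hpar : parSet g⁻¹ ⊆ (endStabilizer hiso γ : Set G) := fun x hx => by
    obtain ⟨D, hD⟩ := exists_dist_smul_orbit_le_of_mem_parSet hiso hx (γ 0)
    obtain ⟨K, hK⟩ := hNPC.exists_fellowTravel D
    exact hattr.asympRays_of_dist_smul_orbit_le hNPC.1 hiso hK hD
  refine ⟨hpar, fun hhyp hproper => hpar.antisymm fun x hx => ?_⟩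
  obtain ⟨p, B, hB⟩ := hhyp.exists_orbit_near hNPC hattr
  exact mem_parSet_inv_of_asympRays hiso hproper hx hB

/-- Let `X` be an NPC space, `G` a locally compact group acting
continuously by isometries, and `g ∈ G` with unbounded action and attracting point
(the boundary point of the ray `γ`). Then `par_G(g⁻¹) ≤ G_ξ`; if moreover `g` is
hyperbolic and the action proper, then `par_G(g⁻¹) = G_ξ`. -/
theorem parabolic_le_endStabilizer
    {X G : Type*} [MetricSpace X] [Group G] [TopologicalSpace G]
    [IsTopologicalGroup G] [LocallyCompactSpace G] [T2Space G]
    [MulAction G X] [ContinuousSMul G X]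
    (hNPC : NPCSpace X) (hiso : IsometricAction G X)
    (g : G) (γ : ℝ → X)
    (hunb : ¬ BoundedElt X g) (hattr : AttractsTo g γ) :
    parSet g⁻¹ ⊆ (endStabilizer hiso γ : Set G) ∧
    (IsHyperbolicIsom X g → ProperAction G X →
      parSet g⁻¹ = (endStabilizer hiso γ : Set G)) :=
  parabolic_le_endStabilizer_general hNPC hiso g γ hattr
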